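/- Let X = (X⁺,X⁻) ∈ L with X⁺ ≠ 0 and X⁻ ≠ 0, let k ∈ {1,…,d}, and let z be a natural number with 1 ≤ z < min{B_X(1), S_X(d)}. Let X' = C(X⁺, X⁻ + z·e_k) be the state obtained by clearing after the arrival of a limit sell order of size z at price k. Then X' ∈ L and: (a) if a(X) ≤ k, then X' = (X⁺, X⁻ + z·e_k), b(X') = b(X) and a(X') = a(X); (b) if b(X) < k < a(X), then X' = (X⁺, X⁻ + z·e_k), b(X') = b(X) and a(X') = k; (c) if B_X⁻¹(z) < k ≤ b(X), then X' = (τ_{k−1}(X⁺), X⁻ + (z − B_X(k))·e_k), b(X') = B_X⁻¹(B_X(k)+1) and a(X') = k; (d) if k ≤ B_X⁻¹(z), then X' = (τ_{B_X⁻¹(z)−1}(X⁺) + (B_X(B_X⁻¹(z)) − z)·e_{B_X⁻¹(z)}, X⁻), b(X') = B_X⁻¹(z+1) and a(X') = a(X). -/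

import Mathlib

open scoped BigOperators

namespace OB

/-- The space of order configurations `E = ℕ^d × ℕ^d`: buy side and sell side. -/
abbrev E (d : ℕ) := (Fin d → ℕ) × (Fin d → ℕ)

/-- Price support of a vector: the set of prices `j ∈ {1,…,d}` with a positive queue. -/
def supp {d : ℕ} (Z : Fin d → ℕ) : Finset ℕ :=
  (Finset.univ.filter fun j : Fin d => 0 < Z j).image fun j : Fin d => (j : ℕ) + 1

/-- `sup supp`, with the convention `sup ∅ = 0`. -/
def supSupp {d : ℕ} (Z : Fin d → ℕ) : ℕ := (supp Z).sup id

/-- `inf supp`, with the convention `inf ∅ = d+1`. -/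
def infSupp {d : ℕ} (Z : Fin d → ℕ) : ℕ :=
  if h : (supp Z).Nonempty then (supp Z).min' h else d + 1

/-- bid price `b(X) = sup supp(X⁺)`. -/
def bid {d : ℕ} (X : E d) : ℕ := supSupp X.1

/-- ask price `a(X) = inf supp(X⁻)`. -/
def ask {d : ℕ} (X : E d) : ℕ := infSupp X.2

/-- Admissible limit order book configurations: `a(X) > b(X)`. -/
def Lset (d : ℕ) : Set (E d) := {X | bid X < ask X}

/-- Entry of a vector at price `i` (prices run from 1 to d; 0 outside this range). -/
def ent {d : ℕ} (z : Fin d → ℕ) (i : ℕ) : ℕ :=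
  if h : 1 ≤ i ∧ i ≤ d then z ⟨i - 1, by omega⟩ else 0

/-- Standard basis vector at price `i`. -/
def e {d : ℕ} (i : ℕ) : Fin d → ℕ := fun j => if (j : ℕ) + 1 = i then 1 else 0

/-- `τ_i`: zero out all entries at prices `> i`. -/
def tauLow {d : ℕ} (i : ℤ) (z : Fin d → ℕ) : Fin d → ℕ :=
  fun j => if ((j : ℕ) + 1 : ℤ) ≤ i then z j else 0

/-- `τ^i`: zero out all entries at prices `< i`. -/
def tauHigh {d : ℕ} (i : ℤ) (z : Fin d → ℕ) : Fin d → ℕ :=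
  fun j => if i ≤ ((j : ℕ) + 1 : ℤ) then z j else 0

/-- `B_X(k) = Σ_{i ≥ k} X⁺_i`. -/
def BX {d : ℕ} (X : E d) (k : ℕ) : ℕ := ∑ j : Fin d, if k ≤ (j : ℕ) + 1 then X.1 j else 0

/-- `S_X(k) = Σ_{i ≤ k} X⁻_i`. -/
def SX {d : ℕ} (X : E d) (k : ℕ) : ℕ := ∑ j : Fin d, if (j : ℕ) + 1 ≤ k then X.2 j else 0

/-- `g_X(k) = S_X(k) − B_X(k)`. -/
def gX {d : ℕ} (X : E d) (k : ℕ) : ℤ := (SX X k : ℤ) - (BX X k : ℤ)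

/-- `p_A(X) = inf{k ∈ {1,…,d} : g_X(k) > 0}`, convention `inf ∅ = d+1`. -/
def pA {d : ℕ} (X : E d) : ℕ :=
  if h : ((Finset.Icc 1 d).filter fun k => 0 < gX X k).Nonempty
  then ((Finset.Icc 1 d).filter fun k => 0 < gX X k).min' h else d + 1

/-- `p_B(X) = sup{k ∈ {1,…,d} : g_X(k) < 0}`, convention `sup ∅ = 0`. -/
def pB {d : ℕ} (X : E d) : ℕ :=
  ((Finset.Icc 1 d).filter fun k => gX X k < 0).sup id

/-- `B_X⁻¹(z) = sup{i ∈ {1,…,d} : B_X(i) ≥ z}`, convention `sup ∅ = 0`. -/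
def Binv {d : ℕ} (X : E d) (z : ℕ) : ℕ :=
  ((Finset.Icc 1 d).filter fun i => z ≤ BX X i).sup id

/-- `S_X⁻¹(z) = inf{i ∈ {1,…,d} : S_X(i) ≥ z}`, convention `inf ∅ = d+1`. -/
def Sinv {d : ℕ} (X : E d) (z : ℕ) : ℕ :=
  if h : ((Finset.Icc 1 d).filter fun i => z ≤ SX X i).Nonempty
  then ((Finset.Icc 1 d).filter fun i => z ≤ SX X i).min' h else d + 1

/-- Buy side after order-matching clearing (Eq. (11) of the paper):
`C(X)⁺ = τ_{p_B}(X⁺)` if `g_X(p_B) ≤ −X⁺_{p_B}`, and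
`C(X)⁺ = τ_{p_B−1}(X⁺) − min{0, g_X(p_B)}·e_{p_B}` otherwise. -/
def clearPlus {d : ℕ} (X : E d) : Fin d → ℕ :=
  if gX X (pB X) ≤ -(ent X.1 (pB X) : ℤ) then tauLow (pB X : ℤ) X.1
  else fun j => tauLow ((pB X : ℤ) - 1) X.1 j + (max 0 (-(gX X (pB X)))).toNat * e (pB X) j

/-- Sell side after order-matching clearing (Eq. (12) of the paper):
`C(X)⁻ = τ^{p_A}(X⁻)` if `g_X(p_A) ≥ X⁻_{p_A}`, and
`C(X)⁻ = τ^{p_A+1}(X⁻) + max{0, g_X(p_A)}·e_{p_A}` otherwise. -/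
def clearMinus {d : ℕ} (X : E d) : Fin d → ℕ :=
  if (ent X.2 (pA X) : ℤ) ≤ gX X (pA X) then tauHigh (pA X : ℤ) X.2
  else fun j => tauHigh ((pA X : ℤ) + 1) X.2 j + (max 0 (gX X (pA X))).toNat * e (pA X) j

/-- The order-matching clearing operator. -/
def clear {d : ℕ} (X : E d) : E d := (clearPlus X, clearMinus X)

/-- Price support of an integer-valued vector. -/
def suppZ {d : ℕ} (W : Fin d → ℤ) : Finset ℕ :=
  (Finset.univ.filter fun j : Fin d => 0 < W j).image fun j : Fin d => (j : ℕ) + 1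

/-- `sup supp` of an integer-valued vector, convention `sup ∅ = 0`. -/
def supSuppZ {d : ℕ} (W : Fin d → ℤ) : ℕ := (suppZ W).sup id

/-- `inf supp` of an integer-valued vector, convention `inf ∅ = d+1`. -/
def infSuppZ {d : ℕ} (W : Fin d → ℤ) : ℕ :=
  if h : (suppZ W).Nonempty then (suppZ W).min' h else d + 1

/-- `D : E → E` is an order-matching clearing operator: it maps into `L`, its fixed
points are exactly `L`, and, with `Z(X) = X − D(X)` (computed in `ℤ^d × ℤ^d`), the
conditions (A1)–(A4) of Definition 2.2 hold. -/
def IsOrderMatchingClearing {d : ℕ} (D : E d → E d) : Prop :=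
  (∀ X : E d, D X ∈ Lset d) ∧
  (∀ X : E d, X ∈ Lset d ↔ D X = X) ∧
  (∀ X : E d,
    -- (A1): the executed orders `Z(X) = X − D(X)` have nonnegative entries
    (∀ j, (D X).1 j ≤ X.1 j ∧ (D X).2 j ≤ X.2 j) ∧
    -- (A2): `|Z(X)⁺| = |Z(X)⁻|`
    (∑ j, ((X.1 j : ℤ) - ((D X).1 j : ℤ))) = (∑ j, ((X.2 j : ℤ) - ((D X).2 j : ℤ))) ∧
    -- (A3): `sup supp(Z(X)⁻) ≤ inf supp(Z(X)⁺)`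
    supSuppZ (fun j => (X.2 j : ℤ) - ((D X).2 j : ℤ)) ≤
      infSuppZ (fun j => (X.1 j : ℤ) - ((D X).1 j : ℤ)) ∧
    -- (A4): `sup supp(Z(X)⁻) ≤ inf supp(D(X)⁻)` and `inf supp(Z(X)⁺) ≥ sup supp(D(X)⁺)`
    supSuppZ (fun j => (X.2 j : ℤ) - ((D X).2 j : ℤ)) ≤ infSupp (D X).2 ∧
    supSupp (D X).1 ≤ infSuppZ (fun j => (X.1 j : ℤ) - ((D X).1 j : ℤ)))

/-!
The sell order changes only the sell side and raises the imbalance `g` by `z` at every price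
`≥ k`. On an admissible book `g_X = -B_X` below the ask and `g_X = S_X` above the bid, so the
matching prices `p_B`, `p_A` of the new book can be read off the sign of `g`. If `k` is above the
bid, the new book is itself admissible, and clearing fixes admissible books. Otherwise the order
crosses the spread: if `B_X(k) < z` it takes all buy orders at prices `≥ k` and the remainder
rests at `k`; if `k ≤ B_X⁻¹(z)` it is absorbed by the buy orders at prices `≥ B_X⁻¹(z)`, leaving
`B_X(B_X⁻¹(z)) − z` at that price.
-/

variable {d : ℕ}

section Support

variable {Z : Fin d → ℕ}

lemma mem_supp_iff {m : ℕ} : m ∈ supp Z ↔ ∃ j : Fin d, 0 < Z j ∧ (j : ℕ) + 1 = m := by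
  simp [supp]

lemma le_supSupp {j : Fin d} (h : 0 < Z j) : (j : ℕ) + 1 ≤ supSupp Z :=
  Finset.le_sup (f := id) (mem_supp_iff.mpr ⟨j, h, rfl⟩)

lemma supSupp_le_iff {m : ℕ} :
    supSupp Z ≤ m ↔ ∀ j : Fin d, m < (j : ℕ) + 1 → Z j = 0 := by
  simp only [supSupp, Finset.sup_le_iff, mem_supp_iff, id]
  constructor
  · intro h j hj
    by_contra hc
    exact absurd (h _ ⟨j, Nat.pos_of_ne_zero hc, rfl⟩) (by omega)
  · rintro h _ ⟨j, hj, rfl⟩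
    by_contra hc
    exact absurd (h j (by omega)) hj.ne'

lemma apply_eq_zero_of_supSupp_lt {j : Fin d} (h : supSupp Z < (j : ℕ) + 1) : Z j = 0 :=
  supSupp_le_iff.mp le_rfl j h

lemma supSupp_le_dim : supSupp Z ≤ d :=
  supSupp_le_iff.mpr fun j hj => absurd j.isLt (by omega)

lemma exists_eq_supSupp (h : 1 ≤ supSupp Z) :
    ∃ j : Fin d, 0 < Z j ∧ (j : ℕ) + 1 = supSupp Z := by
  by_contra! hc
  have : supSupp Z ≤ supSupp Z - 1 := supSupp_le_iff.mpr fun j hj => by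
    by_contra hj0
    have hpos := Nat.pos_of_ne_zero hj0
    exact hc j hpos (le_antisymm (le_supSupp hpos) (by omega))
  omega

lemma infSupp_le {j : Fin d} (h : 0 < Z j) : infSupp Z ≤ (j : ℕ) + 1 := by
  have hmem : (j : ℕ) + 1 ∈ supp Z := mem_supp_iff.mpr ⟨j, h, rfl⟩
  rw [infSupp, dif_pos ⟨_, hmem⟩]
  exact Finset.min'_le _ _ hmem

lemma apply_eq_zero_of_lt_infSupp {j : Fin d} (h : (j : ℕ) + 1 < infSupp Z) : Z j = 0 := by
  by_contra hc
  exact absurd (infSupp_le (Nat.pos_of_ne_zero hc)) (by omega)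

lemma infSupp_le_dim_succ : infSupp Z ≤ d + 1 := by
  rw [infSupp]; split_ifs with h
  · obtain ⟨j, -, hj⟩ := mem_supp_iff.mp ((supp Z).min'_mem h)
    omega
  · rfl

lemma one_le_infSupp : 1 ≤ infSupp Z := by
  rw [infSupp]; split_ifs with h
  · obtain ⟨j, -, hj⟩ := mem_supp_iff.mp ((supp Z).min'_mem h)
    omega
  · omega

lemma exists_eq_infSupp (h : infSupp Z ≤ d) :
    ∃ j : Fin d, 0 < Z j ∧ (j : ℕ) + 1 = infSupp Z := by
  rw [infSupp] at h ⊢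
  split_ifs at h ⊢ with hne
  · exact mem_supp_iff.mp ((supp Z).min'_mem hne)
  · omega

lemma infSupp_eq {j₀ : Fin d} (hpos : 0 < Z j₀) (hzero : ∀ j : Fin d, j < j₀ → Z j = 0) :
    infSupp Z = (j₀ : ℕ) + 1 := by
  refine le_antisymm (infSupp_le hpos) ?_
  by_contra! hlt
  obtain ⟨j, hj, hjeq⟩ := exists_eq_infSupp (Z := Z) (by have := j₀.isLt; omega)
  exact hj.ne' (hzero j (Fin.lt_def.mpr (by omega)))

end Support

section Entries

lemma ent_succ (Z : Fin d → ℕ) (j : Fin d) : ent Z ((j : ℕ) + 1) = Z j :=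
  dif_pos ⟨by omega, j.isLt⟩

lemma sum_ite_eq_ent (Z : Fin d → ℕ) (m : ℕ) :
    ∑ j : Fin d, (if (j : ℕ) + 1 = m then Z j else 0) = ent Z m := by
  by_cases hm : 1 ≤ m ∧ m ≤ d
  · rw [Finset.sum_eq_single_of_mem (⟨m - 1, by omega⟩ : Fin d) (Finset.mem_univ _)
      fun j _ hj => if_neg fun h => hj (Fin.ext (by simp; omega)),
      if_pos (by simp; omega), ent, dif_pos hm]
  · rw [ent, dif_neg hm]
    exact Finset.sum_eq_zero fun j _ => if_neg fun h => hm ⟨by omega, by have := j.isLt; omega⟩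

lemma ent_eq_zero_of_lt_infSupp {Z : Fin d → ℕ} {m : ℕ} (h : m < infSupp Z) :
    ent Z m = 0 := by
  rw [ent]
  split_ifs with hm
  · exact apply_eq_zero_of_lt_infSupp (by simp; omega)
  · rfl

lemma ent_add_smul_e {Z : Fin d → ℕ} {k : ℕ} (hk1 : 1 ≤ k) (hkd : k ≤ d) (c m : ℕ) :
    ent (Z + c • e k) m = ent Z m + if m = k then c else 0 := by
  unfold ent
  split_ifs with hm hmk hmk <;> simp [e] <;> omega

lemma infSupp_add_smul_e {Z : Fin d → ℕ} {k c : ℕ} (hk1 : 1 ≤ k) (hkd : k ≤ d)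
    (hc : 0 < c) :
    infSupp (Z + c • e k) = min (infSupp Z) k := by
  have hval : ∀ j : Fin d,
      (Z + c • e k : Fin d → ℕ) j = Z j + if (j : ℕ) + 1 = k then c else 0 := by
    intro j; simp [e]
  rcases le_or_gt (infSupp Z) k with hle | hlt
  · obtain ⟨j₀, hj₀, hj₀eq⟩ := exists_eq_infSupp (Z := Z) (by omega)
    rw [min_eq_left hle, ← hj₀eq]
    refine infSupp_eq (by rw [hval]; omega) fun j hj => ?_
    rw [Fin.lt_def] at hj
    rw [hval, apply_eq_zero_of_lt_infSupp (Z := Z) (j := j) (by omega), if_neg (by omega)]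
  · rw [min_eq_right hlt.le]
    have := infSupp_eq (Z := Z + c • e k) (j₀ := ⟨k - 1, by omega⟩)
      (by rw [hval, if_pos (by simp; omega)]; omega) fun j hj => by
        rw [Fin.lt_def] at hj
        simp only at hj
        rw [hval, apply_eq_zero_of_lt_infSupp (Z := Z) (j := j) (by omega), if_neg (by omega)]
    simpa [show k - 1 + 1 = k by omega] using this

end Entries

section Tails

variable {X : E d} {m n : ℕ}

lemma BX_antitone (h : m ≤ n) : BX X n ≤ BX X m :=
  Finset.sum_le_sum fun j _ => by split_ifs <;> omega

lemma BX_le_of_forall_eq_zero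
    (h : ∀ j : Fin d, m ≤ (j : ℕ) + 1 → (j : ℕ) + 1 < n → X.1 j = 0) :
    BX X m ≤ BX X n :=
  Finset.sum_le_sum fun j _ => by
    split_ifs with h1 h2 <;> first | omega | exact (h j h1 (by omega)).le

lemma apply_le_BX {j : Fin d} (h : m ≤ (j : ℕ) + 1) : X.1 j ≤ BX X m := by
  have := Finset.single_le_sum (f := fun j : Fin d => if m ≤ (j : ℕ) + 1 then X.1 j else 0)
    (fun _ _ => Nat.zero_le _) (Finset.mem_univ j)
  simp only [if_pos h] at this
  exact this

lemma apply_le_SX {j : Fin d} (h : (j : ℕ) + 1 ≤ m) : X.2 j ≤ SX X m := by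
  have := Finset.single_le_sum (f := fun j : Fin d => if (j : ℕ) + 1 ≤ m then X.2 j else 0)
    (fun _ _ => Nat.zero_le _) (Finset.mem_univ j)
  simp only [if_pos h] at this
  exact this

lemma BX_eq_ent_add (X : E d) (m : ℕ) : BX X m = ent X.1 m + BX X (m + 1) := by
  rw [BX, BX, ← sum_ite_eq_ent, ← Finset.sum_add_distrib]
  exact Finset.sum_congr rfl fun j _ => by split_ifs <;> omega

lemma SX_succ (X : E d) (m : ℕ) : SX X (m + 1) = SX X m + ent X.2 (m + 1) := by
  rw [SX, SX, ← sum_ite_eq_ent, ← Finset.sum_add_distrib]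
  exact Finset.sum_congr rfl fun j _ => by split_ifs <;> omega

lemma ent_le_BX (X : E d) (m : ℕ) : ent X.1 m ≤ BX X m := by
  rw [BX_eq_ent_add X m]; omega

lemma BX_eq_zero_of_bid_lt (h : bid X < m) : BX X m = 0 :=
  Finset.sum_eq_zero fun j _ => by
    split_ifs
    · exact apply_eq_zero_of_supSupp_lt (by unfold bid at h; omega)
    · rfl

lemma SX_eq_zero_of_lt_ask (h : m < ask X) : SX X m = 0 :=
  Finset.sum_eq_zero fun j _ => by
    split_ifs
    · exact apply_eq_zero_of_lt_infSupp (by unfold ask at h; omega)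
    · rfl

lemma BX_pos_iff (hm : 1 ≤ m) : 0 < BX X m ↔ m ≤ bid X := by
  refine ⟨fun h => ?_, fun h => ?_⟩
  · by_contra! hlt
    exact h.ne' (BX_eq_zero_of_bid_lt hlt)
  · obtain ⟨j, hj, hjeq⟩ := exists_eq_supSupp (Z := X.1) (by unfold bid at h; omega)
    exact hj.trans_le (apply_le_BX (by unfold bid at h; omega))

lemma SX_pos_iff (hm : m ≤ d) : 0 < SX X m ↔ ask X ≤ m := by
  refine ⟨fun h => ?_, fun h => ?_⟩
  · by_contra! hlt
    exact h.ne' (SX_eq_zero_of_lt_ask hlt)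
  · obtain ⟨j, hj, hjeq⟩ := exists_eq_infSupp (Z := X.2) (by unfold ask at h; omega)
    exact hj.trans_le (apply_le_SX (by unfold ask at h; omega))

end Tails

section Quantile

variable {X : E d} {z m : ℕ}

lemma le_Binv (h1 : 1 ≤ m) (hd : m ≤ d) (h : z ≤ BX X m) : m ≤ Binv X z :=
  Finset.le_sup (f := id) (Finset.mem_filter.mpr ⟨Finset.mem_Icc.mpr ⟨h1, hd⟩, h⟩)

lemma Binv_le (h : ∀ i, 1 ≤ i → i ≤ d → z ≤ BX X i → i ≤ m) : Binv X z ≤ m :=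
  Finset.sup_le fun i hi => by
    simp only [Finset.mem_filter, Finset.mem_Icc] at hi
    exact h i hi.1.1 hi.1.2 hi.2

lemma le_BX_Binv (h : 1 ≤ Binv X z) : z ≤ BX X (Binv X z) := by
  set s := (Finset.Icc 1 d).filter fun i => z ≤ BX X i
  have hs : s.Nonempty := Finset.nonempty_iff_ne_empty.mpr fun h0 => by
    simp [Binv, s, h0] at h
  obtain ⟨i, hi, hieq⟩ := Finset.exists_mem_eq_sup s hs id
  rw [Binv, hieq]
  exact (Finset.mem_filter.mp hi).2

lemma BX_lt_of_Binv_lt (hz : 0 < z) (h : Binv X z < m) : BX X m < z := by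
  by_contra! hle
  rcases le_or_gt m d with hmd | hmd
  · exact absurd (le_Binv (by omega) hmd hle) (by omega)
  · rw [BX_eq_zero_of_bid_lt (lt_of_le_of_lt supSupp_le_dim hmd)] at hle
    omega

lemma Binv_le_dim : Binv X z ≤ d :=
  Binv_le fun _ _ hi _ => hi

lemma Binv_eq (h1 : 1 ≤ m) (hd : m ≤ d) (hle : z ≤ BX X m) (hlt : BX X (m + 1) < z) :
    Binv X z = m :=
  le_antisymm (Binv_le fun i _ _ hi => by
    by_contra! hmi
    exact absurd (BX_antitone (X := X) (show m + 1 ≤ i by omega)) (by omega))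
    (le_Binv h1 hd hle)

lemma Binv_antitone {z' : ℕ} (h : z ≤ z') : Binv X z' ≤ Binv X z :=
  Binv_le fun _ h1 hd hi => le_Binv h1 hd (h.trans hi)

lemma Binv_le_bid (hz : 0 < z) : Binv X z ≤ bid X :=
  Binv_le fun _ h1 _ hi => (BX_pos_iff h1).mp (hz.trans_le hi)

lemma Binv_BX_add_one_lt (hm : 1 ≤ m) : Binv X (BX X m + 1) < m := by
  by_contra! hle
  have := le_BX_Binv (X := X) (z := BX X m + 1) (by omega)
  exact absurd (BX_antitone (X := X) hle) (by omega)

end Quantile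

section MatchingPrices

variable {X : E d} {p : ℕ}

lemma le_pB {m : ℕ} (h1 : 1 ≤ m) (hd : m ≤ d) (h : gX X m < 0) : m ≤ pB X :=
  Finset.le_sup (f := id) (Finset.mem_filter.mpr ⟨Finset.mem_Icc.mpr ⟨h1, hd⟩, h⟩)

lemma pB_le (h : ∀ m, 1 ≤ m → m ≤ d → gX X m < 0 → m ≤ p) : pB X ≤ p :=
  Finset.sup_le fun m hm => by
    simp only [Finset.mem_filter, Finset.mem_Icc] at hm
    exact h m hm.1.1 hm.1.2 hm.2

lemma pB_eq_of_iff (hp : p ≤ d) (h : ∀ m, 1 ≤ m → m ≤ d → (gX X m < 0 ↔ m ≤ p)) :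
    pB X = p := by
  refine le_antisymm (pB_le fun m h1 hd hm => (h m h1 hd).mp hm) ?_
  rcases Nat.eq_zero_or_pos p with rfl | hp1
  · exact Nat.zero_le _
  · exact le_pB hp1 hp ((h p hp1 hp).mpr le_rfl)

lemma pA_eq_of_iff (hp1 : 1 ≤ p) (hp : p ≤ d + 1)
    (h : ∀ m, 1 ≤ m → m ≤ d → (0 < gX X m ↔ p ≤ m)) : pA X = p := by
  have hfilter : (Finset.Icc 1 d).filter (fun m => 0 < gX X m) = Finset.Icc p d := by
    ext m
    simp only [Finset.mem_filter, Finset.mem_Icc]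
    constructor
    · rintro ⟨⟨h1, hd⟩, hm⟩
      exact ⟨(h m h1 hd).mp hm, hd⟩
    · rintro ⟨hpm, hd⟩
      exact ⟨⟨by omega, hd⟩, (h m (by omega) hd).mpr hpm⟩
  unfold pA
  simp only [hfilter]
  split_ifs with hne
  · exact le_antisymm (Finset.min'_le _ _ (Finset.mem_Icc.mpr ⟨le_rfl, by
      obtain ⟨m, hm⟩ := hne; have := Finset.mem_Icc.mp hm; omega⟩))
      (Finset.le_min' _ _ _ fun m hm => (Finset.mem_Icc.mp hm).1)
  · have : ¬ p ≤ d := fun hpd => hne ⟨p, Finset.mem_Icc.mpr ⟨le_rfl, hpd⟩⟩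
    omega

end MatchingPrices

section Truncation

variable {Z : Fin d → ℕ}

lemma tauLow_eq_self {i : ℤ} (h : (supSupp Z : ℤ) ≤ i) : tauLow i Z = Z := by
  funext j
  rw [tauLow]
  split_ifs with hj
  · rfl
  · exact (apply_eq_zero_of_supSupp_lt (by omega)).symm

lemma tauHigh_eq_self {i : ℤ} (h : i ≤ (infSupp Z : ℤ)) : tauHigh i Z = Z := by
  funext j
  rw [tauHigh]
  split_ifs with hj
  · rfl
  · exact (apply_eq_zero_of_lt_infSupp (by omega)).symm

lemma tauHigh_add_smul_e_of_lt {i : ℤ} {k : ℕ} (hk : (k : ℤ) < i) (c : ℕ) :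
    tauHigh i (Z + c • e k) = tauHigh i Z := by
  funext j
  simp only [tauHigh, Pi.add_apply, Pi.smul_apply, smul_eq_mul, e]
  split_ifs <;> omega

lemma tauLow_eq_tauLow_of_forall_eq_zero {i n : ℕ} (hin : i ≤ n)
    (h : ∀ j : Fin d, i < (j : ℕ) + 1 → (j : ℕ) + 1 ≤ n → Z j = 0) :
    tauLow (i : ℤ) Z = tauLow (n : ℤ) Z := by
  funext j
  simp only [tauLow]
  split_ifs with h1 h2 h2
  · rfl
  · exact absurd h2 (by omega)
  · exact (h j (by omega) (by omega)).symm
  · rfl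

end Truncation

section BestBid

-- The highest buy price below `k` is the last price whose tail volume still exceeds `B_X(k)`.
lemma supSupp_tauLow_sub_one (X : E d) (k : ℕ) :
    supSupp (tauLow ((k : ℤ) - 1) X.1) = Binv X (BX X k + 1) := by
  refine le_antisymm (supSupp_le_iff.mpr fun j hj => ?_) (Binv_le fun m _ _ hm => ?_)
  · simp only [tauLow]
    split_ifs with hjk
    · by_contra hpos
      have hrec := BX_eq_ent_add X ((j : ℕ) + 1)
      rw [ent_succ] at hrec
      have hmono : BX X k ≤ BX X ((j : ℕ) + 1 + 1) := BX_antitone (by omega)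
      have := le_Binv (X := X) (z := BX X k + 1) (m := (j : ℕ) + 1) (by omega) j.isLt (by omega)
      omega
    · rfl
  · by_contra! hlt
    have hzero : ∀ j : Fin d, m ≤ (j : ℕ) + 1 → (j : ℕ) + 1 < k → X.1 j = 0 :=
      fun j h1 h2 => by
        have := apply_eq_zero_of_supSupp_lt (Z := tauLow ((k : ℤ) - 1) X.1) (j := j) (by omega)
        simpa [tauLow, show ((j : ℕ) : ℤ) + 1 ≤ (k : ℤ) - 1 by omega] using this
    exact absurd (BX_le_of_forall_eq_zero hzero) (by omega)

lemma supSupp_tauLow_sub_one_add_smul_e {q c : ℕ} (hq1 : 1 ≤ q) (hqd : q ≤ d) (hc : 0 < c)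
    (Z : Fin d → ℕ) : supSupp (tauLow ((q : ℤ) - 1) Z + c • e q) = q := by
  have hval : ∀ j : Fin d, (tauLow ((q : ℤ) - 1) Z + c • e q : Fin d → ℕ) j =
      (if ((j : ℕ) : ℤ) + 1 ≤ (q : ℤ) - 1 then Z j else 0) +
        if (j : ℕ) + 1 = q then c else 0 := by
    intro j; simp [tauLow, e]
  refine le_antisymm (supSupp_le_iff.mpr fun j hj => ?_) ?_
  · rw [hval, if_neg (by omega), if_neg (by omega)]
  · have := le_supSupp (Z := tauLow ((q : ℤ) - 1) Z + c • e q) (j := ⟨q - 1, by omega⟩)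
      (by rw [hval, if_neg (by dsimp only; omega), if_pos (by dsimp only; omega)]; omega)
    simpa [show q - 1 + 1 = q by omega] using this

end BestBid

section Admissible

variable {X : E d} {m : ℕ}

lemma neg_BX_le_gX (X : E d) (m : ℕ) : -(BX X m : ℤ) ≤ gX X m := by
  unfold gX; omega

lemma gX_eq_neg_BX (h : m < ask X) : gX X m = -(BX X m : ℤ) := by
  rw [gX, SX_eq_zero_of_lt_ask h]; simp

lemma gX_eq_SX (h : bid X < m) : gX X m = SX X m := by
  rw [gX, BX_eq_zero_of_bid_lt h]; simp

lemma pB_eq_bid (hX : X ∈ Lset d) : pB X = bid X :=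
  pB_eq_of_iff supSupp_le_dim fun m hm1 hmd => by
    rcases le_or_gt m (bid X) with hmb | hbm
    · have hB := (BX_pos_iff (X := X) hm1).mpr hmb
      rw [gX_eq_neg_BX (lt_of_le_of_lt hmb hX)]
      omega
    · rw [gX_eq_SX hbm]
      omega

lemma pA_eq_ask (hX : X ∈ Lset d) : pA X = ask X :=
  pA_eq_of_iff one_le_infSupp infSupp_le_dim_succ fun m hm1 hmd => by
    rcases lt_or_ge m (ask X) with hma | ham
    · rw [gX_eq_neg_BX hma]
      omega
    · have hS := (SX_pos_iff (X := X) hmd).mpr ham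
      rw [gX_eq_SX (lt_of_lt_of_le hX ham)]
      omega

lemma clear_eq_self (hX : X ∈ Lset d) : clear X = X := by
  have hplus : clearPlus X = X.1 := by
    have hcond : gX X (pB X) ≤ -(ent X.1 (pB X) : ℤ) := by
      rw [pB_eq_bid hX, gX_eq_neg_BX hX]
      have := ent_le_BX X (bid X)
      omega
    rw [clearPlus, if_pos hcond, pB_eq_bid hX]
    exact tauLow_eq_self le_rfl
  have hminus : clearMinus X = X.2 := by
    have hcond : (ent X.2 (pA X) : ℤ) ≤ gX X (pA X) := by
      rw [pA_eq_ask hX, gX_eq_SX hX]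
      have hS := SX_succ X (ask X - 1)
      have h1 : 1 ≤ ask X := one_le_infSupp
      rw [Nat.sub_add_cancel h1] at hS
      omega
    rw [clearMinus, if_pos hcond, pA_eq_ask hX]
    exact tauHigh_eq_self le_rfl
  rw [clear, hplus, hminus]

end Admissible

section SellOrder

def addLimitSell (X : E d) (z k : ℕ) : E d := (X.1, X.2 + z • e k)

variable {X : E d} {k z : ℕ}

@[simp] lemma addLimitSell_fst : (addLimitSell X z k).1 = X.1 := rfl

@[simp] lemma addLimitSell_snd : (addLimitSell X z k).2 = X.2 + z • e k := rfl

lemma SX_addLimitSell (hk1 : 1 ≤ k) (hkd : k ≤ d) (m : ℕ) :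
    SX (addLimitSell X z k) m = SX X m + if k ≤ m then z else 0 := by
  have key : ∀ j : Fin d,
      (if (j : ℕ) + 1 ≤ m then (X.2 + z • e k : Fin d → ℕ) j else 0) =
      (if (j : ℕ) + 1 ≤ m then X.2 j else 0) +
        if (j : ℕ) + 1 = k then (if k ≤ m then z else 0) else 0 := by
    intro j
    simp only [Pi.add_apply, Pi.smul_apply, smul_eq_mul, e]
    split_ifs <;> omega
  rw [SX, addLimitSell_snd, Finset.sum_congr rfl fun j _ => key j, Finset.sum_add_distrib,
    sum_ite_eq_ent (fun _ => if k ≤ m then z else 0), ent, dif_pos ⟨hk1, hkd⟩]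
  rfl

lemma gX_addLimitSell (hk1 : 1 ≤ k) (hkd : k ≤ d) (m : ℕ) :
    gX (addLimitSell X z k) m = gX X m + if k ≤ m then (z : ℤ) else 0 := by
  have hB : BX (addLimitSell X z k) m = BX X m := rfl
  rw [gX, gX, SX_addLimitSell hk1 hkd, hB]
  split_ifs <;> push_cast <;> ring

lemma gX_addLimitSell_le {m : ℕ} (hk1 : 1 ≤ k) (hkd : k ≤ d) (hm : m < ask X) :
    gX (addLimitSell X z k) m ≤ z - BX X m := by
  rw [gX_addLimitSell hk1 hkd, gX_eq_neg_BX hm]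
  split_ifs <;> omega

lemma sub_BX_le_gX_addLimitSell {m : ℕ} (hk1 : 1 ≤ k) (hkd : k ≤ d) (hkm : k ≤ m) :
    (z : ℤ) - BX X m ≤ gX (addLimitSell X z k) m := by
  rw [gX_addLimitSell hk1 hkd, if_pos hkm]
  linarith [neg_BX_le_gX X m]

lemma clear_addLimitSell_of_bid_lt (hX : X ∈ Lset d) (hk1 : 1 ≤ k) (hkd : k ≤ d) (hz : 0 < z)
    (hbk : bid X < k) :
    clear (addLimitSell X z k) = addLimitSell X z k ∧
      bid (clear (addLimitSell X z k)) = bid X ∧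
      ask (clear (addLimitSell X z k)) = min (ask X) k := by
  have hask : ask (addLimitSell X z k) = min (ask X) k := infSupp_add_smul_e hk1 hkd hz
  have hmem : addLimitSell X z k ∈ Lset d := by
    show bid X < _
    rw [hask]
    exact lt_min hX hbk
  rw [clear_eq_self hmem]
  exact ⟨rfl, rfl, hask⟩


lemma clear_addLimitSell_of_Binv_lt_of_le_bid (hX : X ∈ Lset d) (hk1 : 1 ≤ k) (hkd : k ≤ d)
    (hz : 0 < z) (hBk : Binv X z < k) (hkb : k ≤ bid X) :
    clear (addLimitSell X z k) = (tauLow ((k : ℤ) - 1) X.1, X.2 + (z - BX X k) • e k) ∧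
      bid (clear (addLimitSell X z k)) = Binv X (BX X k + 1) ∧
      ask (clear (addLimitSell X z k)) = k := by
  have hka : k < ask X := lt_of_le_of_lt hkb hX
  have hBk_lt : BX X k < z := BX_lt_of_Binv_lt hz hBk
  have hBk_pos : 0 < BX X k := (BX_pos_iff hk1).mpr hkb
  have hneg : ∀ m, 1 ≤ m → m < k → gX (addLimitSell X z k) m < 0 := fun m hm1 hmk => by
    have := (BX_pos_iff (X := X) hm1).mpr (by omega)
    rw [gX_addLimitSell hk1 hkd, if_neg (by omega), gX_eq_neg_BX (by omega)]
    omega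
  have hpos : ∀ m, k ≤ m → 0 < gX (addLimitSell X z k) m := fun m hkm => by
    have := sub_BX_le_gX_addLimitSell (X := X) (z := z) hk1 hkd hkm
    have := BX_antitone (X := X) hkm
    omega
  have hpB : pB (addLimitSell X z k) = k - 1 := pB_eq_of_iff (by omega) fun m hm1 _ =>
    ⟨fun h => by by_contra; have := hpos m (by omega); omega, fun h => hneg m hm1 (by omega)⟩
  have hpA : pA (addLimitSell X z k) = k := pA_eq_of_iff hk1 (by omega) fun m hm1 _ =>
    ⟨fun h => by by_contra; have := hneg m hm1 (by omega); omega, hpos m⟩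
  have hgk : gX (addLimitSell X z k) k = z - BX X k := by
    rw [gX_addLimitSell hk1 hkd, if_pos le_rfl, gX_eq_neg_BX hka]
    ring
  have hplus : clearPlus (addLimitSell X z k) = tauLow ((k : ℤ) - 1) X.1 := by
    have hcond : gX (addLimitSell X z k) (k - 1) ≤ -(ent X.1 (k - 1) : ℤ) := by
      rw [gX_addLimitSell hk1 hkd, if_neg (by omega), gX_eq_neg_BX (by omega)]
      have := ent_le_BX X (k - 1)
      omega
    rw [clearPlus, hpB, addLimitSell_fst, if_pos hcond]
    congr 1
    omega
  have hminus : clearMinus (addLimitSell X z k) = X.2 + (z - BX X k) • e k := by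
    have hent : ent (addLimitSell X z k).2 k = z := by
      rw [addLimitSell_snd, ent_add_smul_e hk1 hkd, if_pos rfl, ent_eq_zero_of_lt_infSupp hka,
        zero_add]
    have htoNat : (max 0 ((z : ℤ) - BX X k)).toNat = z - BX X k := by omega
    have htau : tauHigh ((k : ℤ) + 1) (addLimitSell X z k).2 = X.2 :=
      (tauHigh_add_smul_e_of_lt (by omega) z).trans
        (tauHigh_eq_self (by unfold ask at hka; omega))
    rw [clearMinus, hpA, hent, hgk, if_neg (by omega), htoNat, htau]
    rfl
  refine ⟨by rw [clear, hplus, hminus], ?_, ?_⟩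
  · rw [bid, clear, hplus, supSupp_tauLow_sub_one]
  · rw [ask, clear, hminus, infSupp_add_smul_e hk1 hkd (by omega)]
    exact min_eq_right hka.le

lemma clearMinus_addLimitSell_of_le_Binv (hX : X ∈ Lset d) (hk1 : 1 ≤ k) (hkd : k ≤ d)
    (hz : 0 < z) (hkq : k ≤ Binv X z) : clearMinus (addLimitSell X z k) = X.2 := by
  set q := Binv X z
  have hBq : z ≤ BX X q := le_BX_Binv (by omega)
  have hBq1 : BX X (q + 1) < z := BX_lt_of_Binv_lt hz (by omega)
  have hqa : q < ask X := lt_of_le_of_lt (Binv_le_bid hz) hX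
  have hqd : q ≤ d := Binv_le_dim
  have hpA : pA (addLimitSell X z k) = q + 1 := pA_eq_of_iff (by omega) (by omega) fun m _ _ => by
    rcases le_or_gt m q with hmq | hqm
    · have := gX_addLimitSell_le (z := z) hk1 hkd (lt_of_le_of_lt hmq hqa)
      have := BX_antitone (X := X) hmq
      omega
    · have := sub_BX_le_gX_addLimitSell (X := X) (z := z) hk1 hkd (show k ≤ m by omega)
      have := BX_antitone (X := X) (show q + 1 ≤ m by omega)
      omega
  have hcond : (ent (addLimitSell X z k).2 (q + 1) : ℤ) ≤ gX (addLimitSell X z k) (q + 1) := by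
    have hS := SX_succ (addLimitSell X z k) q
    rw [SX_addLimitSell hk1 hkd q, if_pos hkq, SX_eq_zero_of_lt_ask hqa] at hS
    rw [gX]
    change _ ≤ _ - (BX X (q + 1) : ℤ)
    omega
  rw [clearMinus, hpA, if_pos hcond, addLimitSell_snd]
  exact (tauHigh_add_smul_e_of_lt (by omega) z).trans
    (tauHigh_eq_self (by unfold ask at hqa; omega))

lemma clearPlus_addLimitSell_of_le_Binv (hX : X ∈ Lset d) (hk1 : 1 ≤ k) (hkd : k ≤ d)
    (hz : 0 < z) (hkq : k ≤ Binv X z) :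
    clearPlus (addLimitSell X z k) =
      tauLow ((Binv X z : ℤ) - 1) X.1 + (BX X (Binv X z) - z) • e (Binv X z) := by
  set q := Binv X z
  have hBq : z ≤ BX X q := le_BX_Binv (by omega)
  have hBq1 : BX X (q + 1) < z := BX_lt_of_Binv_lt hz (by omega)
  have hqa : q < ask X := lt_of_le_of_lt (Binv_le_bid hz) hX
  have hle : ∀ m ≤ q, gX (addLimitSell X z k) m ≤ z - BX X m := fun m hmq =>
    gX_addLimitSell_le hk1 hkd (lt_of_le_of_lt hmq hqa)
  have hpos : ∀ m, q < m → 0 < gX (addLimitSell X z k) m := fun m hqm => by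
    have := sub_BX_le_gX_addLimitSell (X := X) (z := z) hk1 hkd (show k ≤ m by omega)
    have := BX_antitone (X := X) (show q + 1 ≤ m by omega)
    omega
  have hgq : gX (addLimitSell X z k) q = z - BX X q :=
    le_antisymm (hle q le_rfl) (sub_BX_le_gX_addLimitSell hk1 hkd hkq)
  rcases lt_or_eq_of_le hBq with hlt | heq
  · have hpB : pB (addLimitSell X z k) = q := pB_eq_of_iff Binv_le_dim fun m hm1 _ => by
      rcases le_or_gt m q with hmq | hqm
      · have := hle m hmq
        have := BX_antitone (X := X) hmq
        omega
      · have := hpos m hqm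
        omega
    have hcond : ¬ gX (addLimitSell X z k) q ≤ -(ent X.1 q : ℤ) := by
      have := BX_eq_ent_add X q
      omega
    have htoNat : (max 0 (-((z : ℤ) - BX X q))).toNat = BX X q - z := by omega
    rw [clearPlus, hpB, addLimitSell_fst, if_neg hcond, hgq, htoNat]
    rfl
  -- Here the order exactly exhausts the buy orders at prices `≥ q`; `p_B` may fall anywhere
  -- below `q`, but `X⁺` vanishes strictly between `p_B` and `q`.
  · set p := pB (addLimitSell X z k)
    have hpq : p ≤ q - 1 := pB_le fun m _ _ hm => by
      by_contra! hqm
      rcases lt_or_eq_of_le (show q ≤ m by omega) with hqm' | rfl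
      · have := hpos m hqm'
        omega
      · omega
    have hcond : gX (addLimitSell X z k) p ≤ -(ent X.1 p : ℤ) := by
      have := hle p (by omega)
      have := BX_eq_ent_add X p
      have := BX_antitone (X := X) (show p + 1 ≤ q by omega)
      omega
    have hzero : ∀ j : Fin d, p < (j : ℕ) + 1 → (j : ℕ) + 1 ≤ q - 1 → X.1 j = 0 :=
      fun j h1 h2 => by
        by_contra hne
        have hrec := BX_eq_ent_add X ((j : ℕ) + 1)
        rw [ent_succ] at hrec
        have := BX_antitone (X := X) (show (j : ℕ) + 1 + 1 ≤ q by omega)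
        have := hle ((j : ℕ) + 1) (by omega)
        have := le_pB (X := addLimitSell X z k) (m := (j : ℕ) + 1) (by omega) j.isLt (by omega)
        omega
    rw [clearPlus, addLimitSell_fst, if_pos hcond, tauLow_eq_tauLow_of_forall_eq_zero hpq hzero,
      ← heq, Nat.sub_self, zero_smul, add_zero]
    congr 1
    omega

lemma clear_addLimitSell_of_le_Binv (hX : X ∈ Lset d) (hk1 : 1 ≤ k) (hkd : k ≤ d)
    (hz : 0 < z) (hkq : k ≤ Binv X z) :
    clear (addLimitSell X z k) =
        (tauLow ((Binv X z : ℤ) - 1) X.1 + (BX X (Binv X z) - z) • e (Binv X z), X.2) ∧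
      bid (clear (addLimitSell X z k)) = Binv X (z + 1) ∧
      ask (clear (addLimitSell X z k)) = ask X := by
  have hclear : clear (addLimitSell X z k) =
      (tauLow ((Binv X z : ℤ) - 1) X.1 + (BX X (Binv X z) - z) • e (Binv X z), X.2) :=
    congrArg₂ Prod.mk (clearPlus_addLimitSell_of_le_Binv hX hk1 hkd hz hkq)
      (clearMinus_addLimitSell_of_le_Binv hX hk1 hkd hz hkq)
  refine ⟨hclear, ?_, by rw [hclear]; rfl⟩
  rw [hclear, bid]
  dsimp only
  have hqd : Binv X z ≤ d := Binv_le_dim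
  rcases lt_or_eq_of_le (le_BX_Binv (X := X) (z := z) (by omega)) with hlt | heq
  · have hBq1 := BX_lt_of_Binv_lt (X := X) hz (lt_add_one (Binv X z))
    rw [supSupp_tauLow_sub_one_add_smul_e (by omega) hqd (by omega)]
    exact (Binv_eq (by omega) hqd hlt (by omega)).symm
  · rw [← heq, Nat.sub_self, zero_smul, add_zero, supSupp_tauLow_sub_one, ← heq]

lemma clear_addLimitSell_mem_Lset (hX : X ∈ Lset d) (hk1 : 1 ≤ k) (hkd : k ≤ d) (hz : 0 < z) :
    clear (addLimitSell X z k) ∈ Lset d := by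
  show bid _ < ask _
  rcases lt_or_ge (bid X) k with hbk | hkb
  · obtain ⟨-, hbid, hask⟩ := clear_addLimitSell_of_bid_lt hX hk1 hkd hz hbk
    rw [hbid, hask]
    exact lt_min hX hbk
  rcases lt_or_ge (Binv X z) k with hBk | hkq
  · obtain ⟨-, hbid, hask⟩ := clear_addLimitSell_of_Binv_lt_of_le_bid hX hk1 hkd hz hBk hkb
    rw [hbid, hask]
    exact Binv_BX_add_one_lt hk1
  · obtain ⟨-, hbid, hask⟩ := clear_addLimitSell_of_le_Binv hX hk1 hkd hz hkq
    rw [hbid, hask]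
    exact lt_of_le_of_lt ((Binv_antitone (Nat.le_succ z)).trans (Binv_le_bid hz)) hX

end SellOrder

theorem clear_limit_sell_order_general (d : ℕ) (X : E d) (hX : X ∈ Lset d)
    (k z : ℕ) (hk : k ∈ Finset.Icc 1 d)
    (hz1 : 1 ≤ z)
    (X' : E d) (hX' : X' = clear (X.1, X.2 + z • e k)) :
    X' ∈ Lset d ∧
    -- (a) `a(X) ≤ k`
    (ask X ≤ k →
      X' = (X.1, X.2 + z • e k) ∧ bid X' = bid X ∧ ask X' = ask X) ∧
    -- (b) `b(X) < k < a(X)`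
    (bid X < k → k < ask X →
      X' = (X.1, X.2 + z • e k) ∧ bid X' = bid X ∧ ask X' = k) ∧
    -- (c) `B_X⁻¹(z) < k ≤ b(X)`
    (Binv X z < k → k ≤ bid X →
      X' = (tauLow ((k : ℤ) - 1) X.1, X.2 + (z - BX X k) • e k) ∧
      bid X' = Binv X (BX X k + 1) ∧ ask X' = k) ∧
    -- (d) `k ≤ B_X⁻¹(z)`
    (k ≤ Binv X z →
      X' = (tauLow ((Binv X z : ℤ) - 1) X.1 + (BX X (Binv X z) - z) • e (Binv X z), X.2) ∧
      bid X' = Binv X (z + 1) ∧ ask X' = ask X) := by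
  obtain ⟨hk1, hkd⟩ := Finset.mem_Icc.mp hk
  subst hX'
  refine ⟨clear_addLimitSell_mem_Lset hX hk1 hkd hz1, fun hak => ?_, fun hbk hka => ?_,
    clear_addLimitSell_of_Binv_lt_of_le_bid hX hk1 hkd hz1,
    clear_addLimitSell_of_le_Binv hX hk1 hkd hz1⟩
  · obtain ⟨hclear, hbid, hask⟩ :=
      clear_addLimitSell_of_bid_lt hX hk1 hkd hz1 (hX.trans_le hak)
    exact ⟨hclear, hbid, hask.trans (min_eq_left hak)⟩
  · obtain ⟨hclear, hbid, hask⟩ := clear_addLimitSell_of_bid_lt hX hk1 hkd hz1 hbk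
    exact ⟨hclear, hbid, hask.trans (min_eq_right hka.le)⟩

/-- Proposition 2.5, Case 2: limit sell order of size `z` at price `k`. -/
theorem clear_limit_sell_order (d : ℕ) (hd : 1 ≤ d) (X : E d) (hX : X ∈ Lset d)
    (hplus : X.1 ≠ 0) (hminus : X.2 ≠ 0) (k z : ℕ) (hk : k ∈ Finset.Icc 1 d)
    (hz1 : 1 ≤ z) (hz : z < min (BX X 1) (SX X d))
    (X' : E d) (hX' : X' = clear (X.1, X.2 + z • e k)) :
    X' ∈ Lset d ∧
    -- (a) `a(X) ≤ k`
    (ask X ≤ k →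
      X' = (X.1, X.2 + z • e k) ∧ bid X' = bid X ∧ ask X' = ask X) ∧
    -- (b) `b(X) < k < a(X)`
    (bid X < k → k < ask X →
      X' = (X.1, X.2 + z • e k) ∧ bid X' = bid X ∧ ask X' = k) ∧
    -- (c) `B_X⁻¹(z) < k ≤ b(X)`
    (Binv X z < k → k ≤ bid X →
      X' = (tauLow ((k : ℤ) - 1) X.1, X.2 + (z - BX X k) • e k) ∧
      bid X' = Binv X (BX X k + 1) ∧ ask X' = k) ∧
    -- (d) `k ≤ B_X⁻¹(z)`
    (k ≤ Binv X z →
      X' = (tauLow ((Binv X z : ℤ) - 1) X.1 + (BX X (Binv X z) - z) • e (Binv X z), X.2) ∧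
      bid X' = Binv X (z + 1) ∧ ask X' = ask X) :=
  clear_limit_sell_order_general d X hX k z hk hz1 X' hX'

end OB
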